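/- Let G be invertible, M symmetric positive definite, and L symmetric positive semidefinite. Then for any c₁, c₂ > 0, every eigenvalue of I + c₁ G^{-T} M G^{-1} M + c₂ G^{-T} L G^{-1} M is real and bounded below by 1. -/

import Mathlib

/-!
The matrix equals `1 + C * M` with `C = G⁻ᵀ (c₁ M + c₂ L) G⁻¹` positive semidefinite. If
`C M v = λ v` with `v ≠ 0`, then `w = M v` satisfies `w* C w = λ (v* M v)`, and `v* M v > 0`,
`w* C w ≥ 0` force `λ` to be real and nonnegative.
-/

open Matrix

open scoped ComplexOrder MatrixOrder

namespace Matrix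

variable {n 𝕜 : Type*} [Fintype n] [RCLike 𝕜]

theorem PosSemidef.map_algebraMap {A : Matrix n n ℝ} (hA : A.PosSemidef) :
    (A.map (algebraMap ℝ 𝕜)).PosSemidef := by
  classical
  obtain ⟨B, rfl⟩ := CStarAlgebra.nonneg_iff_eq_star_mul_self.mp hA.nonneg
  have hstar : (star B).map (algebraMap ℝ 𝕜) = (B.map (algebraMap ℝ 𝕜))ᴴ := by
    rw [star_eq_conjTranspose, conjTranspose_map _ (fun r => (RCLike.conj_ofReal r).symm)]
  rw [Matrix.map_mul, hstar]
  exact posSemidef_conjTranspose_mul_self _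

theorem PosDef.map_algebraMap [DecidableEq n] {A : Matrix n n ℝ} (hA : A.PosDef) :
    (A.map (algebraMap ℝ 𝕜)).PosDef :=
  hA.posSemidef.map_algebraMap.posDef_iff_isUnit.mpr
    (hA.isUnit.map (algebraMap ℝ 𝕜).mapMatrix)

theorem exists_mulVec_eq_smul_of_mem_spectrum {K : Type*} [Field K] [DecidableEq n]
    {A : Matrix n n K} {μ : K} (hμ : μ ∈ spectrum K A) : ∃ v ≠ 0, A *ᵥ v = μ • v := by
  rw [← spectrum_toLin', ← Module.End.hasEigenvalue_iff_mem_spectrum] at hμ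
  obtain ⟨v, hv⟩ := hμ.exists_hasEigenvector
  exact ⟨v, hv.2, by simpa using hv.apply_eq_smul⟩

theorem PosSemidef.nonneg_of_mem_spectrum_mul [DecidableEq n] {A B : Matrix n n 𝕜}
    (hA : A.PosSemidef) (hB : B.PosDef) {μ : 𝕜} (hμ : μ ∈ spectrum 𝕜 (A * B)) : 0 ≤ μ := by
  obtain ⟨v, hv, hABv⟩ := exists_mulVec_eq_smul_of_mem_spectrum hμ
  have hform : star (B *ᵥ v) ⬝ᵥ (A *ᵥ (B *ᵥ v)) = (star v ⬝ᵥ (B *ᵥ v)) * μ := by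
    rw [mulVec_mulVec, hABv, dotProduct_smul, star_mulVec, ← dotProduct_mulVec,
      hB.isHermitian.eq, smul_eq_mul, mul_comm]
  have hA_form := hA.dotProduct_mulVec_nonneg (B *ᵥ v)
  rw [hform, ← mul_zero (star v ⬝ᵥ (B *ᵥ v))] at hA_form
  exact le_of_mul_le_mul_left hA_form (hB.dotProduct_mulVec_pos hv)

end Matrix

theorem stmt_2_general {n : Type*} [Fintype n] [DecidableEq n]
    (G M L : Matrix n n ℝ) (hM : M.PosDef) (hL : L.PosSemidef)
    (c₁ c₂ : ℝ) (hc₁ : 0 < c₁) (hc₂ : 0 < c₂) :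
    ∀ μ ∈ spectrum ℂ
      ((1 + c₁ • ((Gᵀ)⁻¹ * M * G⁻¹ * M) + c₂ • ((Gᵀ)⁻¹ * L * G⁻¹ * M)).map (algebraMap ℝ ℂ)),
      μ.im = 0 ∧ 1 ≤ μ.re := by
  intro μ hμ
  set C := (G⁻¹)ᴴ * (c₁ • M + c₂ • L) * G⁻¹
  have hC : C.PosSemidef :=
    ((hM.posSemidef.smul hc₁.le).add (hL.smul hc₂.le)).conjTranspose_mul_mul_same _
  have hsplit : 1 + c₁ • ((Gᵀ)⁻¹ * M * G⁻¹ * M) + c₂ • ((Gᵀ)⁻¹ * L * G⁻¹ * M) = 1 + C * M := by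
    simp only [C, conjTranspose_eq_transpose_of_trivial, transpose_nonsing_inv, Matrix.add_mul,
      Matrix.mul_add, Matrix.smul_mul, Matrix.mul_smul, Matrix.mul_assoc, add_assoc]
  have hμ_sub : μ - 1 ∈ spectrum ℂ (C.map (algebraMap ℝ ℂ) * M.map (algebraMap ℝ ℂ)) := by
    rwa [hsplit, Matrix.map_add _ (map_add _), Matrix.map_one _ (map_zero _) (map_one _),
      Matrix.map_mul, ← sub_add_cancel μ 1, ← map_one (algebraMap ℂ (Matrix n n ℂ)),
      spectrum.add_mem_add_iff] at hμ
  have h_nonneg := hC.map_algebraMap.nonneg_of_mem_spectrum_mul hM.map_algebraMap hμ_sub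
  simpa [Complex.le_def, eq_comm, and_comm] using sub_nonneg.mp h_nonneg

theorem stmt_2 {n : Type*} [Fintype n] [DecidableEq n]
    (G M L : Matrix n n ℝ) (hG : IsUnit G.det) (hM : M.PosDef) (hL : L.PosSemidef)
    (c₁ c₂ : ℝ) (hc₁ : 0 < c₁) (hc₂ : 0 < c₂) :
    ∀ μ ∈ spectrum ℂ
      ((1 + c₁ • ((Gᵀ)⁻¹ * M * G⁻¹ * M) + c₂ • ((Gᵀ)⁻¹ * L * G⁻¹ * M)).map (algebraMap ℝ ℂ)),
      μ.im = 0 ∧ 1 ≤ μ.re :=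
  stmt_2_general G M L hM hL c₁ c₂ hc₁ hc₂
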